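/- Farkas' Lemma: Let v_1, ..., v_m be vectors in R^n and let b in R^n. Then exactly one of the following holds: (1) there exist nonnegative constants λ_1, ..., λ_m with b = λ_1 v_1 + ... + λ_m v_m; or (2) there exists w in R^n with w·v_i ≥ 0 for all i and w·b < 0. -/

import Mathlib

/-- The dot product on `Fin n → ℝ`. -/
noncomputable def dotp {n : ℕ} (w u : Fin n → ℝ) : ℝ := ∑ i, w i * u i

open Finset

/-- Conic Carathéodory: a nonnegative combination can be rewritten with linearly
independent support. -/
lemma conic_carath {E : Type*} [AddCommGroup E] [Module ℝ E] {m : ℕ} (v : Fin m → E)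
    (lam : Fin m → ℝ) (hlam : ∀ i, 0 ≤ lam i) :
    ∃ mu : Fin m → ℝ, (∀ i, 0 ≤ mu i) ∧ (∑ i, mu i • v i = ∑ i, lam i • v i) ∧
      LinearIndependent ℝ (fun i : {i // mu i ≠ 0} => v i) := by
  classical
  generalize hk : (Finset.univ.filter fun i => lam i ≠ 0).card = k
  induction k using Nat.strong_induction_on generalizing lam with
  | _ k IH =>
  by_cases hli : LinearIndependent ℝ (fun i : {i // lam i ≠ 0} => v i)
  · exact ⟨lam, hlam, rfl, hli⟩
  · rw [Fintype.not_linearIndependent_iff] at hli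
    obtain ⟨g, hg0, j, hgj⟩ := hli
    -- extend g to Fin m
    set gg : Fin m → ℝ := fun i => if h : lam i ≠ 0 then g ⟨i, h⟩ else 0 with hgg
    have hggsum : ∑ i, gg i • v i = 0 := by
      have h1 : ∑ i ∈ Finset.univ.filter (fun i => lam i ≠ 0), gg i • v i
          = ∑ i, gg i • v i := by
        apply Finset.sum_filter_of_ne
        intro x _ hx hl
        exact hx (by simp [hgg, hl])
      have h2 : ∑ i ∈ Finset.univ.filter (fun i => lam i ≠ 0), gg i • v i
          = ∑ i : {i // lam i ≠ 0}, gg i.1 • v i.1 :=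
        Finset.sum_subtype _ (by simp) _
      have h3 : ∑ i : {i // lam i ≠ 0}, gg i.1 • v i.1 = ∑ i : {i // lam i ≠ 0}, g i • v i.1 :=
        Finset.sum_congr rfl (fun i _ => by rw [show gg i.1 = g i from dif_pos i.2])
      rw [← h1, h2, h3, hg0]
    -- WLOG some gg i > 0
    have key : ∀ G : Fin m → ℝ, (∑ i, G i • v i = 0) → (∀ i, G i ≠ 0 → lam i ≠ 0) →
        (∃ i, 0 < G i) → ∃ mu : Fin m → ℝ, (∀ i, 0 ≤ mu i) ∧
          (∑ i, mu i • v i = ∑ i, lam i • v i) ∧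
          LinearIndependent ℝ (fun i : {i // mu i ≠ 0} => v i) := by
      intro G hGsum hGsupp ⟨i₁, hi₁⟩
      set T : Finset (Fin m) := Finset.univ.filter fun i => 0 < G i with hT
      have hTne : T.Nonempty := ⟨i₁, by simp [hT, hi₁]⟩
      obtain ⟨i₀, hi₀T, hi₀min⟩ := T.exists_min_image (fun i => lam i / G i) hTne
      have hGi₀ : 0 < G i₀ := (Finset.mem_filter.mp hi₀T).2
      set t : ℝ := lam i₀ / G i₀ with ht
      have ht0 : 0 ≤ t := div_nonneg (hlam i₀) hGi₀.le
      set lam' : Fin m → ℝ := fun i => lam i - t * G i with hlam'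
      have hlam'0 : ∀ i, 0 ≤ lam' i := by
        intro i
        by_cases h : 0 < G i
        · have := hi₀min i (by simp [hT, h])
          have : t * G i ≤ lam i := by
            rw [ht]
            calc lam i₀ / G i₀ * G i ≤ lam i / G i * G i := by
                  apply mul_le_mul_of_nonneg_right (hi₀min i (by simp [hT, h])) h.le
              _ = lam i := div_mul_cancel₀ _ h.ne'
          simp [hlam']; linarith
        · push_neg at h
          have : t * G i ≤ 0 := mul_nonpos_of_nonneg_of_nonpos ht0 h
          have := hlam i
          simp [hlam']; linarith
      have hsum' : ∑ i, lam' i • v i = ∑ i, lam i • v i := by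
        simp only [hlam', sub_smul, mul_smul, Finset.sum_sub_distrib]
        rw [← Finset.smul_sum, hGsum, smul_zero, sub_zero]
      have hsubset : (Finset.univ.filter fun i => lam' i ≠ 0) ⊂
          (Finset.univ.filter fun i => lam i ≠ 0) := by
        constructor
        · intro i hi
          simp only [Finset.mem_filter, Finset.mem_univ, true_and] at hi ⊢
          intro h
          apply hi
          have : G i = 0 := by
            by_contra hG
            exact (hGsupp i hG) h
          simp [hlam', h, this]
        · intro hsub
          have hi₀mem : i₀ ∈ Finset.univ.filter fun i => lam i ≠ 0 := by
            simp only [Finset.mem_filter, Finset.mem_univ, true_and]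
            exact fun h => hGsupp i₀ hGi₀.ne' h
          have := hsub hi₀mem
          simp only [Finset.mem_filter, Finset.mem_univ, true_and] at this
          apply this
          simp [hlam', ht, div_mul_cancel₀ _ hGi₀.ne']
      have hcard : (Finset.univ.filter fun i => lam' i ≠ 0).card < k := by
        rw [← hk]; exact Finset.card_lt_card hsubset
      obtain ⟨mu, h1, h2, h3⟩ := IH _ hcard lam' hlam'0 rfl
      exact ⟨mu, h1, h2.trans hsum', h3⟩
    by_cases hpos : ∃ i, 0 < gg i
    · exact key gg hggsum (fun i h hl => h (by simp [hgg, hl])) hpos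
    · apply key (-gg) (by simpa using hggsum)
        (fun i h hl => h (by simp [hgg, hl]))
      push_neg at hpos
      refine ⟨j.1, ?_⟩
      have hj : gg j.1 ≠ 0 := by rw [show gg j.1 = g j from dif_pos j.2]; exact hgj
      have h2 : gg j.1 < 0 := lt_of_le_of_ne (hpos j.1) hj
      simp only [Pi.neg_apply]
      linarith

lemma isClosed_coneSet {n m : ℕ} (v : Fin m → EuclideanSpace ℝ (Fin n)) :
    IsClosed {x : EuclideanSpace ℝ (Fin n) |
      ∃ lam : Fin m → ℝ, (∀ i, 0 ≤ lam i) ∧ x = ∑ i, lam i • v i} := by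
  classical
  have hset : {x : EuclideanSpace ℝ (Fin n) |
        ∃ lam : Fin m → ℝ, (∀ i, 0 ≤ lam i) ∧ x = ∑ i, lam i • v i}
      = ⋃ s ∈ {s : Finset (Fin m) | LinearIndependent ℝ (fun i : s => v i)},
          (fun c : s → ℝ => ∑ i : s, c i • v i.1) '' {c | ∀ i, 0 ≤ c i} := by
    ext x
    simp only [Set.mem_setOf_eq, Set.mem_iUnion, Set.mem_image]
    constructor
    · rintro ⟨lam, hlam, rfl⟩
      obtain ⟨mu, hmu0, hmusum, hmuli⟩ := conic_carath v lam hlam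
      set s : Finset (Fin m) := Finset.univ.filter fun i => mu i ≠ 0 with hs
      let e : ↥s ≃ {i // mu i ≠ 0} := Equiv.subtypeEquivRight (fun i => by simp [hs])
      refine ⟨s, ?_, fun i : s => mu i.1, fun i => hmu0 i.1, ?_⟩
      · have hfe : (fun i : {i // mu i ≠ 0} => v i.1) ∘ e = fun i : s => v i.1 := by
          funext i; rfl
        exact hfe ▸ hmuli.comp e e.injective
      · have h1 : ∑ i : s, mu i.1 • v i.1 = ∑ i ∈ s, mu i • v i :=
          Finset.sum_coe_sort s (fun i => mu i • v i)
        have h2 : ∑ i ∈ s, mu i • v i = ∑ i, mu i • v i := by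
          apply Finset.sum_filter_of_ne
          intro i _ hi hmi
          exact hi (by simp [hmi])
        rw [h1, h2, hmusum]
    · rintro ⟨s, hsli, c, hc0, rfl⟩
      set lam : Fin m → ℝ := fun i => if h : i ∈ s then c ⟨i, h⟩ else 0 with hlam
      refine ⟨lam, fun i => ?_, ?_⟩
      · by_cases h : i ∈ s
        · simp [hlam, h, hc0 ⟨i, h⟩]
        · simp [hlam, h]
      · have h1 : ∑ i, lam i • v i = ∑ i ∈ s, lam i • v i := by
          symm
          apply Finset.sum_subset (Finset.subset_univ s)
          intro i _ hi
          simp [hlam, hi]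
        have h2 : ∑ i ∈ s, lam i • v i = ∑ i : s, lam i.1 • v i.1 :=
          (Finset.sum_coe_sort s (fun i => lam i • v i)).symm
        have h3 : ∑ i : s, lam i.1 • v i.1 = ∑ i : s, c i • v i.1 :=
          Finset.sum_congr rfl (fun i _ => by rw [show lam i.1 = c i from dif_pos i.2])
        rw [h1, h2, h3]
  rw [hset]
  apply Set.Finite.isClosed_biUnion (Set.toFinite _)
  intro s hs
  have hsli : LinearIndependent ℝ (fun i : s => v i) := hs
  set φ : (↥s → ℝ) →ₗ[ℝ] EuclideanSpace ℝ (Fin n) :=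
    { toFun := fun c => ∑ i : s, c i • v i.1
      map_add' := by intro a b; simp [add_smul, Finset.sum_add_distrib]
      map_smul' := by intro r a; simp [smul_smul, Finset.smul_sum] } with hφ
  have hker : LinearMap.ker φ = ⊥ := by
    rw [LinearMap.ker_eq_bot']
    intro c hc
    have := (Fintype.linearIndependent_iff.mp hsli) c hc
    funext i
    exact this i
  have hce := φ.isClosedEmbedding_of_injective hker
  have hcl : IsClosed {c : ↥s → ℝ | ∀ i, 0 ≤ c i} := by
    have : {c : ↥s → ℝ | ∀ i, 0 ≤ c i} = ⋂ i, {c | 0 ≤ c i} := by ext; simp [Set.mem_iInter]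
    rw [this]
    exact isClosed_iInter fun i => isClosed_le continuous_const (continuous_apply i)
  exact hce.isClosedMap _ hcl

lemma farkas_aux {n m : ℕ} (v : Fin m → EuclideanSpace ℝ (Fin n)) (b : EuclideanSpace ℝ (Fin n))
    (h : ¬ ∃ lam : Fin m → ℝ, (∀ i, 0 ≤ lam i) ∧ b = ∑ i, lam i • v i) :
    ∃ w : EuclideanSpace ℝ (Fin n), (∀ i, 0 ≤ ∑ j, w j * v i j) ∧ (∑ j, w j * b j) < 0 := by
  classical
  set K : ConvexCone ℝ (EuclideanSpace ℝ (Fin n)) :=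
    { carrier := {x | ∃ lam : Fin m → ℝ, (∀ i, 0 ≤ lam i) ∧ x = ∑ i, lam i • v i}
      smul_mem' := by
        rintro c hc x ⟨lam, h0, rfl⟩
        exact ⟨fun i => c * lam i, fun i => mul_nonneg hc.le (h0 i), by
          rw [Finset.smul_sum]; exact Finset.sum_congr rfl fun i _ => (smul_smul c (lam i) (v i))⟩
      add_mem' := by
        rintro x ⟨lam1, h1, rfl⟩ y ⟨lam2, h2, rfl⟩
        exact ⟨fun i => lam1 i + lam2 i, fun i => add_nonneg (h1 i) (h2 i), by
          rw [← Finset.sum_add_distrib]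
          exact Finset.sum_congr rfl fun i _ => (add_smul (lam1 i) (lam2 i) (v i)).symm⟩ } with hK
  have hne : (K : Set (EuclideanSpace ℝ (Fin n))).Nonempty :=
    ⟨0, ⟨0, fun i => le_refl 0, by simp⟩⟩
  have hcl : IsClosed (K : Set (EuclideanSpace ℝ (Fin n))) := isClosed_coneSet v
  have hb : b ∉ K := h
  obtain ⟨y, hy1, hy2⟩ : ∃ y, (∀ x ∈ K, 0 ≤ inner ℝ x y) ∧ inner ℝ b y < 0 := by
    have h0 : (0 : EuclideanSpace ℝ (Fin n)) ∈ K := ⟨0, fun i => le_refl 0, by simp⟩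
    let C : ProperCone ℝ (EuclideanSpace ℝ (Fin n)) :=
      { carrier := K
        add_mem' := fun hx hy => K.add_mem hx hy
        zero_mem' := h0
        smul_mem' := fun c x hx => by
          rcases eq_or_lt_of_le c.2 with hc | hc
          · have : c = 0 := NNReal.eq hc.symm
            rw [this, zero_smul]; exact h0
          · exact K.smul_mem hc hx
        isClosed' := hcl }
    exact C.hyperplane_separation' (x₀ := b) hb
  refine ⟨y, fun i => ?_, ?_⟩
  · have hvi : v i ∈ K := by
      refine ⟨fun j => if j = i then 1 else 0, fun j => by positivity, ?_⟩
      simp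
    have := hy1 (v i) hvi
    rw [PiLp.inner_apply] at this
    simp only [RCLike.inner_apply, conj_trivial] at this
    calc (0:ℝ) ≤ ∑ j, v i j * y j := by
          rw [Finset.sum_congr rfl fun j _ => mul_comm (v i j) (y j)]; exact this
      _ = ∑ j, y j * v i j := Finset.sum_congr rfl fun j _ => mul_comm _ _
  · rw [PiLp.inner_apply] at hy2
    simpa only [RCLike.inner_apply, conj_trivial] using hy2

/-- Farkas' Lemma: for vectors `v 1, ..., v m` and `b` in `ℝ^n`, exactly one of the
following holds: (1) `b` is a nonnegative combination of the `v i`; or (2) there is `w`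
with `w · v i ≥ 0` for all `i` and `w · b < 0`. -/
theorem farkas {n m : ℕ} (v : Fin m → (Fin n → ℝ)) (b : Fin n → ℝ) :
    Xor'
      (∃ lam : Fin m → ℝ, (∀ i, 0 ≤ lam i) ∧ b = ∑ i, lam i • v i)
      (∃ w : Fin n → ℝ, (∀ i, 0 ≤ dotp w (v i)) ∧ dotp w b < 0) := by
  have hnotboth : ¬((∃ lam : Fin m → ℝ, (∀ i, 0 ≤ lam i) ∧ b = ∑ i, lam i • v i) ∧
      (∃ w : Fin n → ℝ, (∀ i, 0 ≤ dotp w (v i)) ∧ dotp w b < 0)) := by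
    rintro ⟨⟨lam, hlam, hb⟩, ⟨w, hw, hwb⟩⟩
    have hcalc : dotp w b = ∑ i, lam i * dotp w (v i) := by
      simp only [dotp, hb, Finset.sum_apply, Pi.smul_apply, smul_eq_mul, Finset.mul_sum]
      rw [Finset.sum_comm]
      exact Finset.sum_congr rfl fun i _ => Finset.sum_congr rfl fun j _ => by ring
    have : 0 ≤ dotp w b := by
      rw [hcalc]
      exact Finset.sum_nonneg fun i _ => mul_nonneg (hlam i) (hw i)
    linarith
  by_cases hA : ∃ lam : Fin m → ℝ, (∀ i, 0 ≤ lam i) ∧ b = ∑ i, lam i • v i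
  · exact Or.inl ⟨hA, fun hB => hnotboth ⟨hA, hB⟩⟩
  · refine Or.inr ⟨?_, hA⟩
    obtain ⟨w, hw1, hw2⟩ := farkas_aux (fun i => WithLp.toLp 2 (v i)) (WithLp.toLp 2 b)
      (by rintro ⟨lam, h0, h⟩; exact hA ⟨lam, h0, by simpa using congrArg WithLp.ofLp h⟩)
    exact ⟨w.ofLp, fun i => hw1 i, hw2⟩
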